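/- For integers 0 < k < n/2, let P_{k,n} = 2^{−n} Σ_{h=0}^{k} C(n,h) be the binomial tail probability. Then for every integer h ≥ 1, P_{k,n+h} ≤ P_{k,n} · 2^{−h} · (1 − k/n)^{−h}. -/
import Mathlib


open scoped BigOperators

/-- `P_{k,n} = 2^{−n} Σ_{h=0}^{k} C(n,h)`, the probability that a `Binomial(n, 1/2)`
random variable is at most `k`. -/
noncomputable def Pkn (k n : ℕ) : ℝ :=
  (2 : ℝ) ^ (-(n : ℤ)) * ∑ h ∈ Finset.range (k + 1), (n.choose h : ℝ)

lemma termwise (k m i : ℕ) (hik : i < k) (hkm : k < m) :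
    (m - k) * m.choose i ≤ k * m.choose (i + 1) := by
  have key : (m - k) * (i + 1) ≤ k * (m - i) := by
    calc (m - k) * (i + 1) ≤ (m - i) * k :=
          Nat.mul_le_mul (by omega) (by omega)
      _ = k * (m - i) := Nat.mul_comm _ _
  have h1 := Nat.choose_succ_right_eq m i
  have h2 : (m - k) * m.choose i * (i + 1) ≤ k * m.choose (i + 1) * (i + 1) := by
    calc (m - k) * m.choose i * (i + 1) = (m - k) * (i + 1) * m.choose i := by ring
      _ ≤ k * (m - i) * m.choose i := Nat.mul_le_mul_right _ key
      _ = k * (m.choose i * (m - i)) := by ring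
      _ = k * (m.choose (i + 1) * (i + 1)) := by rw [h1]
      _ = k * m.choose (i + 1) * (i + 1) := by ring
  exact Nat.le_of_mul_le_mul_right h2 (Nat.succ_pos i)

lemma sum_nat_ineq (k m : ℕ) (hkm : k < m) :
    (m - k) * ∑ i ∈ Finset.range k, m.choose i
      ≤ k * ∑ j ∈ Finset.range (k + 1), m.choose j := by
  calc (m - k) * ∑ i ∈ Finset.range k, m.choose i
      = ∑ i ∈ Finset.range k, (m - k) * m.choose i := Finset.mul_sum _ _ _
    _ ≤ ∑ i ∈ Finset.range k, k * m.choose (i + 1) :=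
        Finset.sum_le_sum fun i hi => termwise k m i (Finset.mem_range.mp hi) hkm
    _ = k * ∑ i ∈ Finset.range k, m.choose (i + 1) := (Finset.mul_sum _ _ _).symm
    _ ≤ k * ∑ j ∈ Finset.range (k + 1), m.choose j := by
        apply Nat.mul_le_mul_left
        rw [Finset.sum_range_succ']
        exact Nat.le_add_right _ _
  
lemma sum_split (k m : ℕ) :
    (∑ j ∈ Finset.range (k + 1), ((m + 1).choose j : ℝ))
      = (∑ j ∈ Finset.range (k + 1), (m.choose j : ℝ))
        + ∑ i ∈ Finset.range k, (m.choose i : ℝ) := by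
  rw [Finset.sum_range_succ' (fun j => ((m + 1).choose j : ℝ)),
      Finset.sum_range_succ' (fun j => ((m).choose j : ℝ))]
  simp only [Nat.choose_succ_succ, Nat.cast_add, Finset.sum_add_distrib, Nat.choose_zero_right]
  push_cast
  ring

lemma pkn_pos (k m : ℕ) : 0 < Pkn k m := by
  unfold Pkn
  apply mul_pos (by positivity)
  apply Finset.sum_pos' (fun i _ => by positivity)
  exact ⟨0, Finset.mem_range.mpr (Nat.succ_pos k), by simp⟩

lemma step (k m : ℕ) (hk : 0 < k) (hkm : 2 * k < m) :
    Pkn k (m + 1) ≤ Pkn k m * 2⁻¹ * (1 - (k : ℝ) / m)⁻¹ := by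
  have hm : 0 < m := by omega
  have hkm' : k < m := by omega
  have hmk : (0 : ℝ) < (m : ℝ) - k := by
    have : (k : ℝ) < m := by exact_mod_cast hkm'
    linarith
  have hx : 1 - (k : ℝ) / m = ((m : ℝ) - k) / m := by
    field_simp
  have hsum : (∑ j ∈ Finset.range (k + 1), ((m + 1).choose j : ℝ))
      ≤ (∑ j ∈ Finset.range (k + 1), (m.choose j : ℝ)) * ((m : ℝ) / ((m : ℝ) - k)) := by
    rw [sum_split]
    have key : ((m : ℝ) - k) * ∑ i ∈ Finset.range k, (m.choose i : ℝ)
        ≤ (k : ℝ) * ∑ j ∈ Finset.range (k + 1), (m.choose j : ℝ) := by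
      have := sum_nat_ineq k m hkm'
      have := (Nat.cast_le (α := ℝ)).mpr this
      push_cast [Nat.cast_sub hkm'.le] at this
      convert this using 2 <;> push_cast <;> ring
    rw [show (∑ j ∈ Finset.range (k + 1), (m.choose j : ℝ)) * ((m : ℝ) / ((m : ℝ) - k))
        = (∑ j ∈ Finset.range (k + 1), (m.choose j : ℝ)) * (m : ℝ) / ((m : ℝ) - k) by ring,
      le_div_iff₀ hmk]
    nlinarith [key]
  have hpow : (2 : ℝ) ^ (-((m : ℕ) + 1 : ℤ)) = (2 : ℝ) ^ (-(m : ℤ)) * 2⁻¹ := by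
    rw [show (-((m : ℕ) + 1 : ℤ)) = -(m : ℤ) + (-1) by ring, zpow_add₀ (by norm_num : (2:ℝ) ≠ 0)]
    norm_num
  unfold Pkn
  push_cast
  rw [hpow, hx, inv_div]
  calc (2 : ℝ) ^ (-(m : ℤ)) * 2⁻¹ * ∑ j ∈ Finset.range (k + 1), ((m + 1).choose j : ℝ)
      ≤ (2 : ℝ) ^ (-(m : ℤ)) * 2⁻¹ *
        ((∑ j ∈ Finset.range (k + 1), (m.choose j : ℝ)) * ((m : ℝ) / ((m : ℝ) - k))) := by
        apply mul_le_mul_of_nonneg_left _ (by positivity)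
        convert hsum using 3 <;> push_cast <;> ring
    _ = (2:ℝ) ^ (-(m : ℤ)) * (∑ j ∈ Finset.range (k + 1), (m.choose j : ℝ)) * 2⁻¹
          * ((m : ℝ) / ((m : ℝ) - k)) := by ring

/-- The binomial tail probability drops geometrically:
for `0 < k < n/2` and `h ≥ 1`, `P_{k,n+h} ≤ P_{k,n} · 2^{−h} · (1 − k/n)^{−h}`. -/
theorem binomial_tail_drops_geometrically
    (k n : ℕ) (hk : 0 < k) (hkn : 2 * k < n) (h : ℕ) (hh : 1 ≤ h) :
    Pkn k (n + h) ≤ Pkn k n * (2 : ℝ) ^ (-(h : ℤ)) * (1 - (k : ℝ) / n) ^ (-(h : ℤ)) := by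
  clear hh
  have hn : 0 < n := by omega
  have hkn' : k < n := by omega
  have hxpos : (0 : ℝ) < 1 - (k : ℝ) / n := by
    rw [sub_pos, div_lt_one (by exact_mod_cast hn)]
    exact_mod_cast hkn'
  induction h with
  | zero => simp
  | succ h ih =>
    have hstep := step k (n + h) hk (by omega)
    push_cast at hstep
    have hxmono : (1 - (k : ℝ) / (n + h))⁻¹ ≤ (1 - (k : ℝ) / n)⁻¹ := by
      apply inv_anti₀ hxpos
      have : (k : ℝ) / (n + h) ≤ (k : ℝ) / n := by
        apply div_le_div_of_nonneg_left (by positivity) (by exact_mod_cast hn)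
        push_cast; linarith [Nat.cast_nonneg (α := ℝ) h]
      linarith
    have hP := pkn_pos k (n + h)
    calc Pkn k (n + (h + 1)) = Pkn k ((n + h) + 1) := by ring_nf
      _ ≤ Pkn k (n + h) * 2⁻¹ * (1 - (k : ℝ) / (n + h))⁻¹ := hstep
      _ ≤ Pkn k (n + h) * 2⁻¹ * (1 - (k : ℝ) / n)⁻¹ := by
          apply mul_le_mul_of_nonneg_left hxmono (by positivity)
      _ ≤ (Pkn k n * (2 : ℝ) ^ (-(h : ℤ)) * (1 - (k : ℝ) / n) ^ (-(h : ℤ)))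
            * 2⁻¹ * (1 - (k : ℝ) / n)⁻¹ := by
          apply mul_le_mul_of_nonneg_right _ (by positivity)
          apply mul_le_mul_of_nonneg_right ih (by norm_num)
      _ = Pkn k n * (2 : ℝ) ^ (-((h : ℕ) + 1 : ℤ)) * (1 - (k : ℝ) / n) ^ (-((h : ℕ) + 1 : ℤ)) := by
          rw [show (-((h : ℕ) + 1 : ℤ)) = -(h : ℤ) + (-1) by ring,
            zpow_add₀ (by norm_num : (2:ℝ) ≠ 0), zpow_add₀ (ne_of_gt hxpos)]
          simp [zpow_neg]
          ring
      _ = Pkn k n * (2 : ℝ) ^ (-((h + 1 : ℕ) : ℤ)) * (1 - (k : ℝ) / n) ^ (-((h + 1 : ℕ) : ℤ)) := by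
          push_cast; ring_nf
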